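/- Let H be a real inner product space, let N ≥ 1 be an integer, let 0 = t_0 < t_1 < ⋯ < t_N = T be a partition of [0, T] with T > 0, and let φ_T(t) := T·exp((T−t)/T). For n = 1, …, N let w_n : [t_{n−1}, t_n] → H be continuously differentiable, and for 1 ≤ n ≤ N−1 set ⟦w⟧_n := w_n(t_n) − w_{n+1}(t_n). Then Σ_{n=1}^N ∫_{t_{n−1}}^{t_n} φ_T(t)·⟨w_n′(t), w_n(t)⟩ dt − Σ_{n=1}^{N−1} φ_T(t_n)·⟨⟦w⟧_n, w_{n+1}(t_n)⟩ + φ_T(0)·‖w_1(0)‖² ≥ ½ Σ_{n=1}^N ∫_{t_{n−1}}^{t_n} ‖w_n(t)‖² dt + (T/2) ( ‖w_N(T)‖² + Σ_{n=1}^{N−1} ‖⟦w⟧_n‖² + ‖w_1(0)‖² ). -/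

import Mathlib

/-!
Since `φ_T' = -φ_T / T ≤ -1` on `[0, T]`, integrating
`(φ_T ‖w_n‖² / 2)' = φ_T ⟪w_n', w_n⟫ + φ_T' ‖w_n‖² / 2` over each subinterval gives
`∫ φ_T ⟪w_n', w_n⟫ ≥ [φ_T ‖w_n‖² / 2] + ½ ∫ ‖w_n‖²`. The polarization identity
`-2 ⟪a - b, b⟫ = ‖b‖² - ‖a‖² + ‖a - b‖²` turns each jump term into the boundary values missing
from the neighbouring subintervals plus `φ_T(t_n) ‖⟦w⟧_n‖² / 2`, so all boundary values
telescope to `φ_T(T) ‖w_N(T)‖² / 2 - φ_T(0) ‖w_1(0)‖² / 2`. It remains to use `φ_T ≥ T`.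
-/

open RealInnerProductSpace Set

section WeightedEnergy

variable {H : Type*} [NormedAddCommGroup H] [InnerProductSpace ℝ H]
  {a b : ℝ} {φ φ' : ℝ → ℝ} {w w' : ℝ → H}

theorem integral_mul_inner_deriv_self (hab : a ≤ b)
    (hφ : ∀ s ∈ Icc a b, HasDerivWithinAt φ (φ' s) (Icc a b) s) (hφ' : ContinuousOn φ' (Icc a b))
    (hw : ∀ s ∈ Icc a b, HasDerivWithinAt w (w' s) (Icc a b) s) (hw' : ContinuousOn w' (Icc a b)) :
    ∫ s in a..b, φ s * ⟪w' s, w s⟫ =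
      φ b / 2 * ‖w b‖ ^ 2 - φ a / 2 * ‖w a‖ ^ 2 - ∫ s in a..b, φ' s / 2 * ‖w s‖ ^ 2 := by
  have hwc : ContinuousOn w (Icc a b) := fun s hs => (hw s hs).continuousWithinAt
  have hφc : ContinuousOn φ (Icc a b) := fun s hs => (hφ s hs).continuousWithinAt
  have henergy : ∀ s ∈ Icc a b, HasDerivWithinAt (fun s => φ s / 2 * ‖w s‖ ^ 2)
      (φ' s / 2 * ‖w s‖ ^ 2 + φ s * ⟪w' s, w s⟫) (Icc a b) s := fun s hs => by
    refine (((hφ s hs).div_const 2).mul (hw s hs).norm_sq).congr_deriv ?_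
    rw [real_inner_comm]; ring
  have hint₁ : IntervalIntegrable (fun s => φ' s / 2 * ‖w s‖ ^ 2) MeasureTheory.volume a b :=
    ((hφ'.div_const 2).mul (hwc.norm.pow 2)).intervalIntegrable_of_Icc hab
  have hint₂ : IntervalIntegrable (fun s => φ s * ⟪w' s, w s⟫) MeasureTheory.volume a b :=
    (hφc.mul (hw'.inner hwc)).intervalIntegrable_of_Icc hab
  have hftc := intervalIntegral.integral_eq_sub_of_hasDeriv_right_of_le hab
    (fun s hs => (henergy s hs).continuousWithinAt)
    (fun s hs => ((henergy s (Ioo_subset_Icc_self hs)).hasDerivAt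
      (Icc_mem_nhds hs.1 hs.2)).hasDerivWithinAt) (hint₁.add hint₂)
  rw [intervalIntegral.integral_add hint₁ hint₂] at hftc
  linarith

theorem le_integral_mul_inner_deriv_self (c : ℝ) (hab : a ≤ b)
    (hφ : ∀ s ∈ Icc a b, HasDerivWithinAt φ (φ' s) (Icc a b) s) (hφ' : ContinuousOn φ' (Icc a b))
    (hφ'c : ∀ s ∈ Icc a b, φ' s ≤ -c)
    (hw : ∀ s ∈ Icc a b, HasDerivWithinAt w (w' s) (Icc a b) s) (hw' : ContinuousOn w' (Icc a b)) :
    φ b / 2 * ‖w b‖ ^ 2 - φ a / 2 * ‖w a‖ ^ 2 + c / 2 * ∫ s in a..b, ‖w s‖ ^ 2 ≤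
      ∫ s in a..b, φ s * ⟪w' s, w s⟫ := by
  have hwc : ContinuousOn (fun s => ‖w s‖ ^ 2) (Icc a b) :=
    (ContinuousOn.norm fun s hs => (hw s hs).continuousWithinAt).pow 2
  have hmono : ∫ s in a..b, c / 2 * ‖w s‖ ^ 2 ≤ ∫ s in a..b, -(φ' s / 2 * ‖w s‖ ^ 2) :=
    intervalIntegral.integral_mono_on hab ((hwc.const_mul _).intervalIntegrable_of_Icc hab)
      (((hφ'.div_const 2).mul hwc).neg.intervalIntegrable_of_Icc hab) fun s hs => by
        nlinarith [hφ'c s hs, sq_nonneg ‖w s‖]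
  rw [integral_mul_inner_deriv_self hab hφ hφ' hw hw']
  rw [intervalIntegral.integral_const_mul, intervalIntegral.integral_neg] at hmono
  linarith

theorem neg_mul_inner_sub_self_right (c : ℝ) (x y : H) :
    -(c * ⟪x - y, y⟫) = c / 2 * ‖y‖ ^ 2 - c / 2 * ‖x‖ ^ 2 + c / 2 * ‖x - y‖ ^ 2 := by
  rw [norm_sub_sq_real, inner_sub_left, real_inner_self_eq_norm_sq, real_inner_comm]; ring

end WeightedEnergy

theorem Finset.sum_Icc_sub_add_sum_Icc_succ_sub {M : Type*} [AddCommGroup M] (A B : ℕ → M) {N : ℕ}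
    (hN : 1 ≤ N) :
    ∑ n ∈ Finset.Icc 1 N, (A n - B n) + ∑ n ∈ Finset.Icc 1 (N - 1), (B (n + 1) - A n) =
      A N - B 1 := by
  obtain ⟨K, rfl⟩ := Nat.exists_eq_add_of_le' hN
  rw [Nat.add_sub_cancel]
  induction K with
  | zero => simp
  | succ K ih =>
    rw [Finset.sum_Icc_succ_top (b := K + 1) (by omega),
      Finset.sum_Icc_succ_top (b := K) (f := fun n => B (n + 1) - A n) (by omega),
      ← sub_eq_zero, ← sub_eq_zero.2 (ih (by omega))]
    abel

noncomputable def expWeight (T s : ℝ) : ℝ := T * Real.exp ((T - s) / T)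

theorem expWeight_self (T : ℝ) : expWeight T T = T := by
  simp [expWeight]

theorem le_expWeight {T s : ℝ} (hT : 0 ≤ T) (hs : s ≤ T) : T ≤ expWeight T s :=
  le_mul_of_one_le_right hT (Real.one_le_exp (div_nonneg (sub_nonneg.2 hs) hT))

theorem hasDerivAt_expWeight {T : ℝ} (hT : T ≠ 0) (s : ℝ) :
    HasDerivAt (expWeight T) (-Real.exp ((T - s) / T)) s := by
  refine ((((hasDerivAt_id s).const_sub T).div_const T).exp.const_mul T).congr_deriv ?_
  field_simp
  rfl

theorem le_integral_expWeight_mul_inner_deriv_self {H : Type*} [NormedAddCommGroup H]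
    [InnerProductSpace ℝ H] {T a b : ℝ} {w w' : ℝ → H} (hT : 0 < T) (hab : a ≤ b) (hbT : b ≤ T)
    (hw : ∀ s ∈ Icc a b, HasDerivWithinAt w (w' s) (Icc a b) s) (hw' : ContinuousOn w' (Icc a b)) :
    expWeight T b / 2 * ‖w b‖ ^ 2 - expWeight T a / 2 * ‖w a‖ ^ 2 + 1 / 2 * ∫ s in a..b, ‖w s‖ ^ 2 ≤
      ∫ s in a..b, expWeight T s * ⟪w' s, w s⟫ :=
  le_integral_mul_inner_deriv_self 1 hab
    (fun s _ => (hasDerivAt_expWeight hT.ne' s).hasDerivWithinAt) (by fun_prop)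
    (fun s hs => neg_le_neg (Real.one_le_exp (div_nonneg (by linarith [hs.2]) hT.le))) hw hw'

/-- Weighted lower bound for the upwind discontinuous Galerkin time-derivative form,
with the exponential weight `φ_T(t) = T exp((T-t)/T)`: it controls the full
`L²(0,T)`-in-time norm plus `T/2` times the squared jumps and endpoint values. -/
theorem upwind_dg_time_derivative_weighted_bound
    {H : Type*} [NormedAddCommGroup H] [InnerProductSpace ℝ H]
    (N : ℕ) (hN : 1 ≤ N) (T : ℝ) (hT : 0 < T) (t : ℕ → ℝ)
    (ht0 : t 0 = 0) (htN : t N = T) (htmono : ∀ n < N, t n < t (n + 1))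
    (w w' : ℕ → ℝ → H)
    (hw : ∀ n ∈ Finset.Icc 1 N, ∀ s ∈ Set.Icc (t (n - 1)) (t n),
      HasDerivWithinAt (w n) (w' n s) (Set.Icc (t (n - 1)) (t n)) s)
    (hw' : ∀ n ∈ Finset.Icc 1 N, ContinuousOn (w' n) (Set.Icc (t (n - 1)) (t n))) :
    (∑ n ∈ Finset.Icc 1 N,
        ∫ s in (t (n - 1))..(t n), T * Real.exp ((T - s) / T) * ⟪w' n s, w n s⟫)
        - (∑ n ∈ Finset.Icc 1 (N - 1),
            T * Real.exp ((T - t n) / T) * ⟪w n (t n) - w (n + 1) (t n), w (n + 1) (t n)⟫)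
        + T * Real.exp ((T - 0) / T) * ‖w 1 0‖ ^ 2 ≥
      (1 / 2) * (∑ n ∈ Finset.Icc 1 N, ∫ s in (t (n - 1))..(t n), ‖w n s‖ ^ 2)
        + (T / 2) * (‖w N T‖ ^ 2 +
            (∑ n ∈ Finset.Icc 1 (N - 1), ‖w n (t n) - w (n + 1) (t n)‖ ^ 2) +
            ‖w 1 0‖ ^ 2) := by
  set Eright := fun n => expWeight T (t n) / 2 * ‖w n (t n)‖ ^ 2
  set Eleft := fun n => expWeight T (t (n - 1)) / 2 * ‖w n (t (n - 1))‖ ^ 2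
  have ht_mono : MonotoneOn t (Iic N) :=
    (strictMonoOn_Iic_of_lt_succ fun m hm => by simpa using htmono m hm).monotoneOn
  have ht_le : ∀ n ≤ N, t n ≤ T := fun n hn => htN ▸ ht_mono hn (le_refl N) hn
  have hinterval : ∀ n ∈ Finset.Icc 1 N, Eright n - Eleft n +
      1 / 2 * ∫ s in (t (n - 1))..(t n), ‖w n s‖ ^ 2 ≤
      ∫ s in (t (n - 1))..(t n), expWeight T s * ⟪w' n s, w n s⟫ := fun n hn => by
    obtain ⟨h1n, hnN⟩ := Finset.mem_Icc.1 hn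
    exact le_integral_expWeight_mul_inner_deriv_self hT
      (ht_mono (show n - 1 ≤ N by omega) hnN (by omega)) (ht_le n hnN) (hw n hn) (hw' n hn)
  have hjump : ∀ n ∈ Finset.Icc 1 (N - 1),
      -(expWeight T (t n) * ⟪w n (t n) - w (n + 1) (t n), w (n + 1) (t n)⟫) =
        Eleft (n + 1) - Eright n + expWeight T (t n) / 2 * ‖w n (t n) - w (n + 1) (t n)‖ ^ 2 :=
    fun n _ => neg_mul_inner_sub_self_right _ _ _
  have hjump_le : T / 2 * ∑ n ∈ Finset.Icc 1 (N - 1), ‖w n (t n) - w (n + 1) (t n)‖ ^ 2 ≤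
      ∑ n ∈ Finset.Icc 1 (N - 1), expWeight T (t n) / 2 * ‖w n (t n) - w (n + 1) (t n)‖ ^ 2 := by
    rw [Finset.mul_sum]
    exact Finset.sum_le_sum fun n hn => by
      gcongr; exact le_expWeight hT.le (ht_le n (by simp at hn; omega))
  have hstart : T / 2 * ‖w 1 0‖ ^ 2 ≤ expWeight T 0 / 2 * ‖w 1 0‖ ^ 2 := by
    gcongr; exact le_expWeight hT.le hT.le
  have hend : Eright N = T / 2 * ‖w N T‖ ^ 2 := by simp [Eright, htN, expWeight_self]
  have hbegin : Eleft 1 = expWeight T 0 / 2 * ‖w 1 0‖ ^ 2 := by simp [Eleft, ht0]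
  have htel := Finset.sum_Icc_sub_add_sum_Icc_succ_sub Eright Eleft hN
  have hsum := Finset.sum_le_sum hinterval
  have hjumps := Finset.sum_congr rfl hjump
  rw [Finset.sum_add_distrib, ← Finset.mul_sum] at hsum
  rw [Finset.sum_neg_distrib, Finset.sum_add_distrib] at hjumps
  show (∑ n ∈ Finset.Icc 1 N, ∫ s in (t (n - 1))..(t n), expWeight T s * ⟪w' n s, w n s⟫)
      - (∑ n ∈ Finset.Icc 1 (N - 1),
          expWeight T (t n) * ⟪w n (t n) - w (n + 1) (t n), w (n + 1) (t n)⟫)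
      + expWeight T 0 * ‖w 1 0‖ ^ 2 ≥ _
  linarith
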